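/- arXiv:1609.07237 — 3 statements merged into one kernel-verified Lean document; each statement's English description precedes it below -/
import Mathlib

section
/- Let n ≥ 1, λ > 0 and 0 < m̲ ≤ m̄ be real constants. Let W : ℝ → Matrix (Fin n) (Fin n) ℝ be such that at every time t, W has a derivative W'(t), W(t) is symmetric, and m̲‖v‖² ≤ vᵀ W(t) v ≤ m̄‖v‖² for every vector v ∈ Fin n → ℝ. Let A, B : ℝ → Matrix (Fin n) (Fin n) ℝ and ρ : ℝ → ℝ be such that for every t the matrix −W'(t) + A(t)·W(t) + W(t)·A(t)ᵀ − ρ(t)·B(t)·B(t)ᵀ + 2λ·W(t) is negative semidefinite. If δ : ℝ → (Fin n → ℝ) is differentiable with δ'(t) = (A(t) − (ρ(t)/2)·B(t)·B(t)ᵀ·W(t)⁻¹) applied to δ(t) for every t, then for every t ≥ 0 one has ‖δ(t)‖ ≤ √(m̄/m̲) · exp(−λ t) · ‖δ(0)‖. -/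
/-!
With `u = W⁻¹ δ`, the function `V = δᵀ W⁻¹ δ = uᵀ W u` is a Lyapunov function: since
`(W⁻¹)' = -W⁻¹ W' W⁻¹`, along the closed-loop dynamics
`V' = uᵀ (-W' + A W + W Aᵀ - ρ B Bᵀ) u`, which the matrix inequality bounds by `-2λ V`.
Grönwall gives `V(t) ≤ e^{-2λt} V(0)`, and the bounds `m̲ ≤ W ≤ m̄` translate into
`‖δ‖² / m̄ ≤ V ≤ ‖δ‖² / m̲`.
-/

open Matrix

attribute [local instance] Matrix.linftyOpNormedAddCommGroup Matrix.linftyOpNormedSpace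
attribute [local instance] Matrix.linftyOpNormedRing Matrix.linftyOpNormedAlgebra

theorem EuclideanSpace.norm_sq_eq_dotProduct {ι : Type*} [Fintype ι] (v : EuclideanSpace ℝ ι) :
    ‖v‖ ^ 2 = v ⬝ᵥ v := by
  rw [← real_inner_self_eq_norm_sq, EuclideanSpace.inner_eq_star_dotProduct, star_trivial]

namespace Matrix

variable {ι : Type*} [Fintype ι]

theorem dotProduct_mulVec_mulVec_self {R : Type*} [CommSemiring R] (W X : Matrix ι ι R)
    (u : ι → R) : (W *ᵥ u) ⬝ᵥ X *ᵥ (W *ᵥ u) = u ⬝ᵥ (Wᵀ * X * W) *ᵥ u := by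
  rw [← mulVec_mulVec, ← mulVec_mulVec, dotProduct_transpose_mulVec, dotProduct_comm]

theorem dotProduct_self_nonneg (v : ι → ℝ) : 0 ≤ v ⬝ᵥ v :=
  Finset.sum_nonneg fun i _ => mul_self_nonneg (v i)

variable [DecidableEq ι] {W : Matrix ι ι ℝ}

theorem dotProduct_inv_mulVec_eq (hdet : IsUnit W.det) (x : ι → ℝ) :
    x ⬝ᵥ W⁻¹ *ᵥ x = (W⁻¹ *ᵥ x) ⬝ᵥ W *ᵥ (W⁻¹ *ᵥ x) := by
  rw [mulVec_mulVec, mul_nonsing_inv _ hdet, one_mulVec, dotProduct_comm]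

theorem isUnit_det_of_le_dotProduct_mulVec {m : ℝ} (hm : 0 < m)
    (h : ∀ v, m * (v ⬝ᵥ v) ≤ v ⬝ᵥ W *ᵥ v) : IsUnit W.det := by
  rw [← isUnit_iff_isUnit_det, ← mulVec_injective_iff_isUnit]
  intro a b hab
  have hd := h (a - b)
  rw [mulVec_sub, hab, sub_self, dotProduct_zero] at hd
  exact sub_eq_zero.mp (dotProduct_self_eq_zero.mp (le_antisymm
    (nonpos_of_mul_nonpos_right hd hm) (dotProduct_self_nonneg _)))

/-- Expanding `0 ≤ (u - W⁻¹ v)ᵀ W (u - W⁻¹ v)`: the quadratic form of `W⁻¹` is the Legendre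
transform of that of `W`. -/
theorem two_mul_dotProduct_sub_le_dotProduct_inv_mulVec (hsymm : W.IsSymm)
    (hpsd : ∀ v, 0 ≤ v ⬝ᵥ W *ᵥ v) (hdet : IsUnit W.det) (u v : ι → ℝ) :
    2 * (u ⬝ᵥ v) - u ⬝ᵥ W *ᵥ u ≤ v ⬝ᵥ W⁻¹ *ᵥ v := by
  set w := W⁻¹ *ᵥ v
  have hWw : W *ᵥ w = v := by rw [mulVec_mulVec, mul_nonsing_inv _ hdet, one_mulVec]
  have hsq := hpsd (u - w)
  have hcross : w ⬝ᵥ W *ᵥ u = u ⬝ᵥ v := by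
    rw [← hWw, ← hsymm.eq, dotProduct_transpose_mulVec, hsymm.eq]
  simp only [mulVec_sub, sub_dotProduct, dotProduct_sub, hWw, hcross] at hsq
  rw [dotProduct_comm v w]
  linarith

theorem dotProduct_self_le_mul_dotProduct_inv_mulVec {M : ℝ} (hM : 0 < M) (hsymm : W.IsSymm)
    (hpsd : ∀ v, 0 ≤ v ⬝ᵥ W *ᵥ v) (hdet : IsUnit W.det)
    (hle : ∀ v, v ⬝ᵥ W *ᵥ v ≤ M * (v ⬝ᵥ v)) (v : ι → ℝ) : v ⬝ᵥ v ≤ M * (v ⬝ᵥ W⁻¹ *ᵥ v) := by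
  have h := two_mul_dotProduct_sub_le_dotProduct_inv_mulVec hsymm hpsd hdet (M⁻¹ • v) v
  have hWv : M⁻¹ * (v ⬝ᵥ W *ᵥ v) ≤ v ⬝ᵥ v := (inv_mul_le_iff₀ hM).mpr (hle v)
  simp only [mulVec_smul, smul_dotProduct, dotProduct_smul, smul_eq_mul] at h
  have : M⁻¹ * (v ⬝ᵥ v) ≤ v ⬝ᵥ W⁻¹ *ᵥ v := by
    nlinarith [mul_le_mul_of_nonneg_left hWv (inv_pos.mpr hM).le]
  rwa [inv_mul_le_iff₀ hM] at this

theorem mul_dotProduct_inv_mulVec_le_dotProduct_self {m : ℝ} (hm : 0 ≤ m) (hdet : IsUnit W.det)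
    (hle : ∀ v, m * (v ⬝ᵥ v) ≤ v ⬝ᵥ W *ᵥ v) (v : ι → ℝ) : m * (v ⬝ᵥ W⁻¹ *ᵥ v) ≤ v ⬝ᵥ v := by
  set w := W⁻¹ *ᵥ v
  have hWw : W *ᵥ w = v := by rw [mulVec_mulVec, mul_nonsing_inv _ hdet, one_mulVec]
  have hw := hle w
  rw [hWw] at hw
  have hsq := dotProduct_self_nonneg (v - m • w)
  simp only [sub_dotProduct, dotProduct_sub, smul_dotProduct, dotProduct_smul, smul_eq_mul] at hsq
  rw [dotProduct_comm w v] at hsq hw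
  nlinarith [mul_le_mul_of_nonneg_left hw hm]

theorem conj_lyapunov_eq {W' K : Matrix ι ι ℝ} (hsymm : W.IsSymm) (hdet : IsUnit W.det) :
    Wᵀ * (Kᵀ * W⁻¹ + -(W⁻¹ * W' * W⁻¹) + W⁻¹ * K) * W = W * Kᵀ - W' + K * W := by
  simp only [hsymm.eq, Matrix.mul_add, Matrix.add_mul, Matrix.mul_neg, Matrix.neg_mul,
    Matrix.mul_assoc, nonsing_inv_mul _ hdet, mul_nonsing_inv_cancel_left _ _ hdet, Matrix.mul_one]
  abel

theorem mul_transpose_sub_smul_mul_inv {A G : Matrix ι ι ℝ} {c : ℝ} (hsymm : W.IsSymm)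
    (hdet : IsUnit W.det) (hG : G.IsSymm) : W * (A - c • (G * W⁻¹))ᵀ = W * Aᵀ - c • G := by
  rw [transpose_sub, transpose_smul, transpose_mul, transpose_nonsing_inv, hsymm.eq, hG.eq,
    Matrix.mul_sub, mul_smul_comm, mul_nonsing_inv_cancel_left _ _ hdet]

end Matrix

section Calculus

variable {ι κ : Type*} [Fintype ι] [Fintype κ] {t : ℝ}

theorem HasDerivAt.matrix_apply {M : ℝ → Matrix ι κ ℝ} {M' : Matrix ι κ ℝ}
    (hM : HasDerivAt M M' t) (i : ι) (j : κ) : HasDerivAt (fun s => M s i j) (M' i j) t :=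
  (entryLinearMap ℝ ℝ i j).toContinuousLinearMap.hasFDerivAt.comp_hasDerivAt t hM

theorem HasDerivAt.dotProduct {v w : ℝ → ι → ℝ} {v' w' : ι → ℝ} (hv : HasDerivAt v v' t)
    (hw : HasDerivAt w w' t) : HasDerivAt (fun s => v s ⬝ᵥ w s) (v' ⬝ᵥ w t + v t ⬝ᵥ w') t := by
  have := HasDerivAt.fun_sum (u := Finset.univ)
    fun i _ => (hasDerivAt_pi.mp hv i).mul (hasDerivAt_pi.mp hw i)
  rwa [Finset.sum_add_distrib] at this

theorem HasDerivAt.mulVec {M : ℝ → Matrix ι κ ℝ} {M' : Matrix ι κ ℝ} {v : ℝ → κ → ℝ}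
    {v' : κ → ℝ} (hM : HasDerivAt M M' t) (hv : HasDerivAt v v' t) :
    HasDerivAt (fun s => M s *ᵥ v s) (M' *ᵥ v t + M t *ᵥ v') t :=
  hasDerivAt_pi.mpr fun i =>
    (hasDerivAt_pi.mpr fun j => hM.matrix_apply i j).dotProduct hv

theorem HasDerivAt.matrix_inv [DecidableEq ι] {W : ℝ → Matrix ι ι ℝ} {W' : Matrix ι ι ℝ}
    (hW : HasDerivAt W W' t) (hdet : IsUnit (W t).det) :
    HasDerivAt (fun s => (W s)⁻¹) (-((W t)⁻¹ * W' * (W t)⁻¹)) t := by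
  have : CompleteSpace (Matrix ι ι ℝ) := FiniteDimensional.complete ℝ _
  obtain ⟨u, hu⟩ := (isUnit_iff_isUnit_det _).mpr hdet
  have hinv := (hu ▸ hasFDerivAt_ringInverse u).comp_hasDerivAt t hW
  rw [Function.comp_def] at hinv
  simp_rw [nonsing_inv_eq_ringInverse]
  refine hinv.congr_deriv ?_
  rw [_root_.neg_apply, ContinuousLinearMap.mulLeftRight_apply, ← hu,
    Ring.inverse_unit]

theorem HasDerivAt.dotProduct_mulVec_self_of_linear {x : ℝ → ι → ℝ} {K P' : Matrix ι ι ℝ}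
    {P : ℝ → Matrix ι ι ℝ} (hx : HasDerivAt x (K *ᵥ x t) t) (hP : HasDerivAt P P' t) :
    HasDerivAt (fun s => x s ⬝ᵥ P s *ᵥ x s) (x t ⬝ᵥ (Kᵀ * P t + P' + P t * K) *ᵥ x t) t := by
  convert hx.dotProduct (hP.mulVec hx) using 1
  simp only [add_mulVec, ← mulVec_mulVec, dotProduct_add, dotProduct_transpose_mulVec]
  rw [dotProduct_comm (P t *ᵥ x t)]
  ring

theorem le_mul_exp_of_hasDerivAt_le_mul {f f' : ℝ → ℝ} {c : ℝ}
    (hf : ∀ s, HasDerivAt f (f' s) s) (hle : ∀ s, f' s ≤ c * f s) (ht : 0 ≤ t) :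
    f t ≤ f 0 * Real.exp (c * t) := by
  have := le_gronwallBound_of_liminf_deriv_right_le (f' := f') (ε := 0) (b := t)
    (fun s _ => (hf s).continuousAt.continuousWithinAt)
    (fun s _ r hr => (hf s).hasDerivWithinAt.liminf_right_slope_le hr) le_rfl
    (fun s _ => by simpa using hle s) t ⟨ht, le_rfl⟩
  rwa [gronwallBound_ε0, sub_zero] at this

theorem hasDerivAt_dotProduct_inv_mulVec_of_feedback [DecidableEq ι] {W : ℝ → Matrix ι ι ℝ}
    {W' A G : Matrix ι ι ℝ} {c : ℝ} {x : ℝ → ι → ℝ} (hW : HasDerivAt W W' t)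
    (hsymm : (W t).IsSymm) (hdet : IsUnit (W t).det) (hG : G.IsSymm)
    (hx : HasDerivAt x ((A - (c / 2) • (G * (W t)⁻¹)) *ᵥ x t) t) :
    HasDerivAt (fun s => x s ⬝ᵥ (W s)⁻¹ *ᵥ x s)
      (((W t)⁻¹ *ᵥ x t) ⬝ᵥ (-W' + A * W t + W t * Aᵀ - c • G) *ᵥ ((W t)⁻¹ *ᵥ x t)) t := by
  convert hx.dotProduct_mulVec_self_of_linear (hW.matrix_inv hdet) using 1
  set u := (W t)⁻¹ *ᵥ x t
  have hu : W t *ᵥ u = x t := by rw [mulVec_mulVec, mul_nonsing_inv _ hdet, one_mulVec]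
  conv_rhs => rw [← hu, dotProduct_mulVec_mulVec_self, conj_lyapunov_eq hsymm hdet,
    mul_transpose_sub_smul_mul_inv hsymm hdet hG, sub_mul, smul_mul_assoc,
    nonsing_inv_mul_cancel_right _ _ hdet]
  congr 2
  module

theorem dotProduct_inv_mulVec_le_mul_exp [DecidableEq ι] {W W' A B : ℝ → Matrix ι ι ℝ}
    {ρ : ℝ → ℝ} {lam : ℝ} {x : ℝ → ι → ℝ} (hW : ∀ s, HasDerivAt W (W' s) s)
    (hsymm : ∀ s, (W s).IsSymm) (hdet : ∀ s, IsUnit (W s).det)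
    (hNSD : ∀ s v, v ⬝ᵥ (-(W' s) + A s * W s + W s * (A s)ᵀ - ρ s • (B s * (B s)ᵀ)
      + (2 * lam) • W s) *ᵥ v ≤ 0)
    (hx : ∀ s, HasDerivAt x ((A s - (ρ s / 2) • (B s * (B s)ᵀ * (W s)⁻¹)) *ᵥ x s) s)
    (ht : 0 ≤ t) :
    x t ⬝ᵥ (W t)⁻¹ *ᵥ x t ≤ x 0 ⬝ᵥ (W 0)⁻¹ *ᵥ x 0 * Real.exp (-(2 * lam) * t) := by
  refine le_mul_exp_of_hasDerivAt_le_mul (fun s => hasDerivAt_dotProduct_inv_mulVec_of_feedback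
    (hW s) (hsymm s) (hdet s) (isSymm_mul_transpose_self (B s)) (hx s)) (fun s => ?_) ht
  have h := hNSD s ((W s)⁻¹ *ᵥ x s)
  rw [add_mulVec, dotProduct_add, smul_mulVec, dotProduct_smul, smul_eq_mul] at h
  rw [dotProduct_inv_mulVec_eq (hdet s)]
  linarith

end Calculus

theorem norm_le_sqrt_div_mul_mul_norm_of_le {ι : Type*} [Fintype ι] [DecidableEq ι]
    {W₀ W₁ : Matrix ι ι ℝ} {m M c : ℝ} (hm : 0 < m) (hmM : m ≤ M) (hsymm : W₁.IsSymm)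
    (hlo₀ : ∀ v, m * (v ⬝ᵥ v) ≤ v ⬝ᵥ W₀ *ᵥ v) (hlo₁ : ∀ v, m * (v ⬝ᵥ v) ≤ v ⬝ᵥ W₁ *ᵥ v)
    (hhi₁ : ∀ v, v ⬝ᵥ W₁ *ᵥ v ≤ M * (v ⬝ᵥ v)) {x y : EuclideanSpace ℝ ι} (hc : 0 ≤ c)
    (h : y ⬝ᵥ W₁⁻¹ *ᵥ y ≤ x ⬝ᵥ W₀⁻¹ *ᵥ x * c ^ 2) :
    ‖y‖ ≤ Real.sqrt (M / m) * c * ‖x‖ := by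
  have hM : 0 < M := hm.trans_le hmM
  have hy := dotProduct_self_le_mul_dotProduct_inv_mulVec hM hsymm
    (fun v => (mul_nonneg hm.le (dotProduct_self_nonneg v)).trans (hlo₁ v))
    (isUnit_det_of_le_dotProduct_mulVec hm hlo₁) hhi₁ y
  have hx := mul_dotProduct_inv_mulVec_le_dotProduct_self hm.le
    (isUnit_det_of_le_dotProduct_mulVec hm hlo₀) hlo₀ x
  have hsq : ‖y‖ ^ 2 ≤ (Real.sqrt (M / m) * c * ‖x‖) ^ 2 := by
    rw [mul_pow, mul_pow, Real.sq_sqrt (div_nonneg hM.le hm.le),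
      EuclideanSpace.norm_sq_eq_dotProduct, EuclideanSpace.norm_sq_eq_dotProduct]
    calc _ ≤ M * (y ⬝ᵥ W₁⁻¹ *ᵥ y) := hy
      _ ≤ M * (x ⬝ᵥ W₀⁻¹ *ᵥ x * c ^ 2) := by gcongr
      _ ≤ M * ((x ⬝ᵥ x) / m * c ^ 2) := by
        gcongr
        exact (le_div_iff₀' hm).mpr hx
      _ = _ := by ring
  exact (pow_le_pow_iff_left₀ (norm_nonneg _) (by positivity) two_ne_zero).mp hsq

theorem stmt_0_general (n : ℕ) (lam mlo mhi : ℝ)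
    (hmlo : 0 < mlo) (hm : mlo ≤ mhi)
    (W W' : ℝ → Matrix (Fin n) (Fin n) ℝ)
    (hWderiv : ∀ t, HasDerivAt W (W' t) t)
    (hWsym : ∀ t, (W t).IsSymm)
    (hWlo : ∀ t, ∀ v : EuclideanSpace ℝ (Fin n), mlo * ‖v‖ ^ 2 ≤ v ⬝ᵥ (W t).mulVec v)
    (hWhi : ∀ t, ∀ v : EuclideanSpace ℝ (Fin n), v ⬝ᵥ (W t).mulVec v ≤ mhi * ‖v‖ ^ 2)
    (A B : ℝ → Matrix (Fin n) (Fin n) ℝ) (ρ : ℝ → ℝ)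
    (hNSD : ∀ t, ∀ v : Fin n → ℝ,
      v ⬝ᵥ (-(W' t) + A t * W t + W t * (A t)ᵀ - ρ t • (B t * (B t)ᵀ)
            + (2 * lam) • W t).mulVec v ≤ 0)
    (δ : ℝ → EuclideanSpace ℝ (Fin n)) (hδ : Differentiable ℝ δ)
    (hode : ∀ t, deriv δ t =
      (A t - (ρ t / 2) • (B t * (B t)ᵀ * (W t)⁻¹)).mulVec (δ t)) :
    ∀ t, 0 ≤ t → ‖δ t‖ ≤ Real.sqrt (mhi / mlo) * Real.exp (-lam * t) * ‖δ 0‖ := by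
  intro t ht
  have hlo s v : mlo * (v ⬝ᵥ v) ≤ v ⬝ᵥ W s *ᵥ v := by
    simpa [EuclideanSpace.norm_sq_eq_dotProduct] using hWlo s (WithLp.toLp 2 v)
  have hhi s v : v ⬝ᵥ W s *ᵥ v ≤ mhi * (v ⬝ᵥ v) := by
    simpa [EuclideanSpace.norm_sq_eq_dotProduct] using hWhi s (WithLp.toLp 2 v)
  have hdet s := isUnit_det_of_le_dotProduct_mulVec hmlo (hlo s)
  have hδ' s : HasDerivAt (fun r => (δ r : Fin n → ℝ))
      ((A s - (ρ s / 2) • (B s * (B s)ᵀ * (W s)⁻¹)) *ᵥ δ s) s :=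
    hode s ▸ (PiLp.hasFDerivAt_ofLp 2 (δ s)).comp_hasDerivAt s (hδ s).hasDerivAt
  have hdecay := dotProduct_inv_mulVec_le_mul_exp hWderiv hWsym hdet hNSD hδ' ht
  refine norm_le_sqrt_div_mul_mul_norm_of_le hmlo hm (hWsym t) (hlo 0) (hlo t) (hhi t)
    (Real.exp_pos _).le ?_
  convert hdecay using 2
  rw [← Real.exp_nat_mul]
  ring_nf

theorem stmt_0 (n : ℕ) (hn : 1 ≤ n) (lam mlo mhi : ℝ)
    (hlam : 0 < lam) (hmlo : 0 < mlo) (hm : mlo ≤ mhi)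
    (W W' : ℝ → Matrix (Fin n) (Fin n) ℝ)
    (hWderiv : ∀ t, HasDerivAt W (W' t) t)
    (hWsym : ∀ t, (W t).IsSymm)
    (hWlo : ∀ t, ∀ v : EuclideanSpace ℝ (Fin n), mlo * ‖v‖ ^ 2 ≤ v ⬝ᵥ (W t).mulVec v)
    (hWhi : ∀ t, ∀ v : EuclideanSpace ℝ (Fin n), v ⬝ᵥ (W t).mulVec v ≤ mhi * ‖v‖ ^ 2)
    (A B : ℝ → Matrix (Fin n) (Fin n) ℝ) (ρ : ℝ → ℝ)
    (hNSD : ∀ t, ∀ v : Fin n → ℝ,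
      v ⬝ᵥ (-(W' t) + A t * W t + W t * (A t)ᵀ - ρ t • (B t * (B t)ᵀ)
            + (2 * lam) • W t).mulVec v ≤ 0)
    (δ : ℝ → EuclideanSpace ℝ (Fin n)) (hδ : Differentiable ℝ δ)
    (hode : ∀ t, deriv δ t =
      (A t - (ρ t / 2) • (B t * (B t)ᵀ * (W t)⁻¹)).mulVec (δ t)) :
    ∀ t, 0 ≤ t → ‖δ t‖ ≤ Real.sqrt (mhi / mlo) * Real.exp (-lam * t) * ‖δ 0‖ :=
  stmt_0_general n lam mlo mhi hmlo hm W W' hWderiv hWsym hWlo hWhi A B ρ hNSD δ hδ hode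
end

section
/- Let W, Ẇ, A, B be real n×n matrices with W symmetric positive definite and Ẇ symmetric, and let ρ, λ be real numbers. If the matrix S := −Ẇ + A·W + W·Aᵀ − ρ·B·Bᵀ + 2λ·W is negative definite, then, setting M := W⁻¹ and K := −(ρ/2)·Bᵀ·M, the matrix −M·Ẇ·M + (A + B·K)ᵀ·M + M·(A + B·K) + 2λ·M is negative definite. -/
open Matrix

variable {ι 𝕜 : Type*} [Fintype ι] [DecidableEq ι] [Field 𝕜] [NeZero (2 : 𝕜)]

/-- The feedback terms `(B * K)ᵀ * M` and `M * (B * K)` each contribute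
`-(ρ / 2) • M * B * Bᵀ * M`; together they are the conjugate of `-ρ • B * Bᵀ`. -/
theorem inv_mul_openLoop_mul_inv {W Wdot A B : Matrix ι ι 𝕜} (hW : IsUnit W.det)
    (hWsymm : Wᵀ = W) (ρ lam : 𝕜) :
    W⁻¹ * (-Wdot + A * W + W * Aᵀ - ρ • (B * Bᵀ) + (2 * lam) • W) * W⁻¹
      = -(W⁻¹ * Wdot * W⁻¹) + (A + B * (-(ρ / 2) • (Bᵀ * W⁻¹)))ᵀ * W⁻¹
        + W⁻¹ * (A + B * (-(ρ / 2) • (Bᵀ * W⁻¹))) + (2 * lam) • W⁻¹ := by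
  have hMsymm : (W⁻¹)ᵀ = W⁻¹ := by rw [transpose_nonsing_inv, hWsymm]
  have cancel_left (X : Matrix ι ι 𝕜) : W⁻¹ * (W * X) = X := by
    rw [← Matrix.mul_assoc, nonsing_inv_mul W hW, Matrix.one_mul]
  simp only [transpose_add, transpose_mul, transpose_smul, transpose_transpose, hMsymm,
    Matrix.mul_neg, Matrix.mul_add, Matrix.add_mul, Matrix.mul_sub, Matrix.sub_mul,
    Matrix.neg_mul, Matrix.mul_smul, Matrix.smul_mul, Matrix.mul_assoc, cancel_left,
    mul_nonsing_inv W hW, Matrix.mul_one]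
  match_scalars <;> field_simp
  ring

theorem stmt_1_general (n : ℕ) (W Wdot A B : Matrix (Fin n) (Fin n) ℝ)
    (hW : W.PosDef) (ρ lam : ℝ)
    (hS : (-(-Wdot + A * W + W * Aᵀ - ρ • (B * Bᵀ) + (2 * lam) • W)).PosDef) :
    (-(-(W⁻¹ * Wdot * W⁻¹) + (A + B * (-(ρ / 2) • (Bᵀ * W⁻¹)))ᵀ * W⁻¹
        + W⁻¹ * (A + B * (-(ρ / 2) • (Bᵀ * W⁻¹))) + (2 * lam) • W⁻¹)).PosDef := by
  have hWsymm : Wᵀ = W := by simpa using hW.isHermitian.eq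
  have hMsymm : (W⁻¹)ᴴ = W⁻¹ := by
    rw [conjTranspose_eq_transpose_of_trivial, transpose_nonsing_inv, hWsymm]
  have hM : IsUnit W⁻¹ := isUnit_nonsing_inv_iff.mpr hW.isUnit
  have hcongr := hS.conjTranspose_mul_mul_same (mulVec_injective_of_isUnit hM)
  rwa [hMsymm, Matrix.mul_neg, Matrix.neg_mul,
    inv_mul_openLoop_mul_inv (hW.isUnit.map detMonoidHom) hWsymm] at hcongr

theorem stmt_1 (n : ℕ) (W Wdot A B : Matrix (Fin n) (Fin n) ℝ)
    (hW : W.PosDef) (hWdot : Wdot.IsSymm) (ρ lam : ℝ)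
    (hS : (-(-Wdot + A * W + W * Aᵀ - ρ • (B * Bᵀ) + (2 * lam) • W)).PosDef) :
    (-(-(W⁻¹ * Wdot * W⁻¹) + (A + B * (-(ρ / 2) • (Bᵀ * W⁻¹)))ᵀ * W⁻¹
        + W⁻¹ * (A + B * (-(ρ / 2) • (Bᵀ * W⁻¹))) + (2 * lam) • W⁻¹)).PosDef :=
  stmt_1_general n W Wdot A B hW ρ lam hS
end

section
/- Let W, Ẇ, A, B be real n×n matrices with W symmetric positive definite and Ẇ symmetric, let λ be a real number, and set M := W⁻¹ and Ṁ := −M·Ẇ·M. Then the following are equivalent: (i) for every nonzero vector δ with δᵀ·M·B = 0 one has δᵀ(Ṁ + Aᵀ·M + M·A)δ < −2λ · δᵀ M δ; (ii) for every nonzero vector η with ηᵀ·B = 0 one has ηᵀ(−Ẇ + A·W + W·Aᵀ)η < −2λ · ηᵀ W η. -/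
open Matrix

private lemma quad_subst {n : ℕ} (T W : Matrix (Fin n) (Fin n) ℝ) (v : Fin n → ℝ) :
    (W *ᵥ v) ⬝ᵥ T *ᵥ (W *ᵥ v) = v ⬝ᵥ (Wᵀ * T * W) *ᵥ v := by
  simp only [dotProduct_mulVec, ← vecMul_vecMul, vecMul_transpose]

theorem stmt_3 (n : ℕ) (W Wdot A B : Matrix (Fin n) (Fin n) ℝ)
    (hW : W.PosDef) (hWdot : Wdot.IsSymm) (lam : ℝ) :
    (∀ δ : Fin n → ℝ, δ ≠ 0 → δ ᵥ* (W⁻¹ * B) = 0 →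
        δ ⬝ᵥ (-(W⁻¹ * Wdot * W⁻¹) + Aᵀ * W⁻¹ + W⁻¹ * A).mulVec δ
          < -2 * lam * (δ ⬝ᵥ (W⁻¹).mulVec δ)) ↔
    (∀ η : Fin n → ℝ, η ≠ 0 → η ᵥ* B = 0 →
        η ⬝ᵥ (-Wdot + A * W + W * Aᵀ).mulVec η < -2 * lam * (η ⬝ᵥ W.mulVec η)) := by
  have hdet : IsUnit W.det := isUnit_iff_ne_zero.mpr hW.det_pos.ne'
  have hWM : W * W⁻¹ = 1 := Matrix.mul_nonsing_inv W hdet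
  have hMW : W⁻¹ * W = 1 := Matrix.nonsing_inv_mul W hdet
  have hWs : Wᵀ = W := hW.isHermitian
  have hMs : (W⁻¹)ᵀ = W⁻¹ := by
    rw [Matrix.transpose_nonsing_inv, hWs]
  constructor
  · intro h η hη hηB
    have hδ : W *ᵥ η ≠ 0 := by
      intro h0
      apply hη
      have : W⁻¹ *ᵥ (W *ᵥ η) = 0 := by rw [h0, mulVec_zero]
      rwa [mulVec_mulVec, hMW, one_mulVec] at this
    have hB : (W *ᵥ η) ᵥ* (W⁻¹ * B) = 0 := by
      rw [← vecMul_transpose, vecMul_vecMul, hWs, ← Matrix.mul_assoc, hWM, Matrix.one_mul, hηB]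
    have := h (W *ᵥ η) hδ hB
    rw [quad_subst, quad_subst, hWs] at this
    have e1 : W * (-(W⁻¹ * Wdot * W⁻¹) + Aᵀ * W⁻¹ + W⁻¹ * A) * W
        = -Wdot + A * W + W * Aᵀ := by
      have h1 : W * (W⁻¹ * Wdot * W⁻¹) * W = Wdot := by
        rw [← Matrix.mul_assoc, ← Matrix.mul_assoc, hWM, Matrix.one_mul, Matrix.mul_assoc,
          hMW, Matrix.mul_one]
      have h2 : W * (Aᵀ * W⁻¹) * W = W * Aᵀ := by
        rw [Matrix.mul_assoc, Matrix.mul_assoc, hMW, Matrix.mul_one]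
      have h3 : W * (W⁻¹ * A) * W = A * W := by
        rw [← Matrix.mul_assoc, hWM, Matrix.one_mul]
      rw [Matrix.mul_add, Matrix.mul_add, Matrix.add_mul, Matrix.add_mul, Matrix.mul_neg,
        Matrix.neg_mul, h1, h2, h3]
      abel
    have e2 : W * W⁻¹ * W = W := by rw [hWM, Matrix.one_mul]
    rwa [e1, e2] at this
  · intro h δ hδ hδB
    have hη : W⁻¹ *ᵥ δ ≠ 0 := by
      intro h0
      apply hδ
      have : W *ᵥ (W⁻¹ *ᵥ δ) = 0 := by rw [h0, mulVec_zero]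
      rwa [mulVec_mulVec, hWM, one_mulVec] at this
    have hB : (W⁻¹ *ᵥ δ) ᵥ* B = 0 := by
      rw [← hMs, mulVec_transpose, vecMul_vecMul, hδB]
    have := h (W⁻¹ *ᵥ δ) hη hB
    rw [quad_subst, quad_subst, hMs] at this
    have e1 : W⁻¹ * (-Wdot + A * W + W * Aᵀ) * W⁻¹
        = -(W⁻¹ * Wdot * W⁻¹) + Aᵀ * W⁻¹ + W⁻¹ * A := by
      have h2 : W⁻¹ * (A * W) * W⁻¹ = W⁻¹ * A := by
        rw [Matrix.mul_assoc, Matrix.mul_assoc, hWM, Matrix.mul_one]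
      have h3 : W⁻¹ * (W * Aᵀ) * W⁻¹ = Aᵀ * W⁻¹ := by
        rw [← Matrix.mul_assoc, hMW, Matrix.one_mul]
      rw [Matrix.mul_add, Matrix.mul_add, Matrix.add_mul, Matrix.add_mul, Matrix.mul_neg,
        Matrix.neg_mul, h2, h3, Matrix.mul_assoc, ← Matrix.mul_assoc W⁻¹ Wdot W⁻¹]
      abel
    have e2 : W⁻¹ * W * W⁻¹ = W⁻¹ := by rw [hMW, Matrix.one_mul]
    rwa [e1, e2] at this
end
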